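/- arXiv:math/0104227 — 2 statements merged into one kernel-verified Lean document; each statement's English description precedes it below -/
import Mathlib

section
/- Let A and B be symmetric n×n matrices with A positive semi-definite, B ∈ Γ_k^+, and A + B ∈ Γ_k^+. Then σ_k(A + B) ≥ σ_k(B). If instead A is negative semi-definite (with the same other hypotheses), then σ_k(A + B) ≤ σ_k(B). -/
open Finset Matrix

/-- The `k`-th elementary symmetric function of a vector in `ℝⁿ`. -/
noncomputable def esymmVec (n k : ℕ) (x : Fin n → ℝ) : ℝ :=
  ∑ s ∈ Finset.univ.powersetCard k, ∏ i ∈ s, x i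

/-- `σ_k(A)`: the `k`-th elementary symmetric function of the eigenvalues of a
symmetric (Hermitian) real matrix `A`. -/
noncomputable def sigmaM (n k : ℕ) (A : Matrix (Fin n) (Fin n) ℝ) : ℝ :=
  if h : A.IsHermitian then esymmVec n k h.eigenvalues else 0

/-- The `q`-th Newton transformation
`T_q(A) = σ_q(A)·I − σ_{q−1}(A)·A + ⋯ + (−1)^q A^q`. -/
noncomputable def newtonT (n q : ℕ) (A : Matrix (Fin n) (Fin n) ℝ) :
    Matrix (Fin n) (Fin n) ℝ :=
  ∑ j ∈ Finset.range (q + 1), ((-1 : ℝ) ^ j * sigmaM n (q - j) A) • A ^ j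

/-- The Gårding cone `Γ_k^+`: the connected component of `{σ_k > 0}` in `ℝⁿ`
containing the positive cone (represented by the point `(1,…,1)`). -/
noncomputable def GammaPlus (n k : ℕ) : Set (Fin n → ℝ) :=
  connectedComponentIn {x | 0 < esymmVec n k x} (fun _ => 1)

/-- A symmetric matrix lies in `Γ_k^+` if its eigenvalue vector does. -/
def InGammaPlus (n k : ℕ) (A : Matrix (Fin n) (Fin n) ℝ) : Prop :=
  ∃ h : A.IsHermitian, h.eigenvalues ∈ GammaPlus n k

/-!
If `A` is positive semi-definite, the Courant–Fischer argument shows that each eigenvalue of `B`,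
in decreasing order, is at most the corresponding eigenvalue of `A + B`. So it suffices to show that
`σ_k` is nondecreasing in each coordinate on the closed cone `{σ_0, …, σ_k ≥ 0}`. That cone contains
`Γ_k^+`: inside `{σ_k > 0}` it coincides with the open cone `{σ_0, …, σ_k > 0}`, so it is relatively
clopen there, and it contains the point `(1, …, 1)` of the connected set `Γ_k^+`.

Raising a coordinate `λ_i` raises `σ_j(λ)` by a multiple of `σ_{j-1}(λ ∖ λ_i)`, so monotonicity
reduces to deletion: if `σ_j(λ) ≥ 0` for `j ≤ k`, then `σ_j(λ ∖ λ_i) ≥ 0` for `j < k`.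
The coefficients of the `(n-k)`-th derivative of the real-rooted polynomial `∏ (X + λ_i)` are
positive multiples of `σ_k, …, σ_0`, so the cone condition says that this derivative has no positive
root, and Rolle's theorem shows that removing the factor `X + λ_i` cannot create one.
The negative semi-definite case is the first one applied to `-A` and `A + B`.
-/

namespace Multiset

theorem sum_map_pos {ι R : Type*} [AddCommMonoid R] [PartialOrder R] [IsOrderedCancelAddMonoid R]
    {s : Multiset ι} {f : ι → R} (hs : s ≠ 0) (hf : ∀ i ∈ s, 0 < f i) : 0 < (s.map f).sum := by
  simpa using sum_lt_sum_of_nonempty (f := fun _ => (0 : R)) hs hf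

theorem esymm_cons_succ {R : Type*} [CommSemiring R] (a : R) (s : Multiset R) (j : ℕ) :
    (a ::ₘ s).esymm (j + 1) = s.esymm (j + 1) + a * s.esymm j := by
  simp only [esymm, powersetCard_cons, map_add, sum_add, map_map, Function.comp_def, prod_cons,
    sum_map_mul_left]

theorem esymm_nonneg {R : Type*} [CommSemiring R] [PartialOrder R] [IsOrderedRing R]
    {s : Multiset R} (hs : ∀ a ∈ s, 0 ≤ a) (j : ℕ) : 0 ≤ s.esymm j :=
  sum_nonneg fun _ hx => by
    obtain ⟨t, ht, rfl⟩ := mem_map.1 hx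
    exact prod_nonneg fun a ha => hs a (mem_of_le (mem_powersetCard.1 ht).1 ha)

theorem esymm_pos {R : Type*} [CommSemiring R] [PartialOrder R] [IsStrictOrderedRing R]
    {s : Multiset R} (hs : ∀ a ∈ s, 0 < a) {j : ℕ} (hj : j ≤ card s) :
    0 < s.esymm j := by
  refine sum_map_pos (fun h => ?_) fun t ht =>
    prod_pos fun a ha => hs a (mem_of_le (mem_powersetCard.1 ht).1 ha)
  have := card_powersetCard j s
  rw [h, card_zero] at this
  exact (Nat.choose_pos hj).ne this

end Multiset

namespace Polynomial

theorem Splits.derivative_of_real {p : ℝ[X]} (hp : p.Splits) : (derivative p).Splits := by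
  refine splits_iff_card_roots.2 (le_antisymm (card_roots' _) ?_)
  have := card_roots_le_derivative p
  have := natDegree_derivative_le p
  rw [splits_iff_card_roots.1 hp] at *
  omega

theorem Splits.iterate_derivative_of_real {p : ℝ[X]} (hp : p.Splits) (m : ℕ) :
    (derivative^[m] p).Splits := by
  induction m with
  | zero => exact hp
  | succ m ih => rw [Function.iterate_succ_apply']; exact ih.derivative_of_real

theorem coeff_nonneg_of_roots_nonpos {p : ℝ[X]} (hp : p.Splits) (hlc : 0 ≤ p.leadingCoeff)
    (hroots : ∀ r ∈ p.roots, r ≤ 0) (j : ℕ) : 0 ≤ p.coeff j := by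
  rcases le_or_gt j p.natDegree with hj | hj
  · rw [coeff_eq_esymm_roots_of_splits hp hj, mul_assoc, ← Multiset.esymm_neg]
    refine mul_nonneg hlc (Multiset.esymm_nonneg (fun a ha => ?_) _)
    obtain ⟨r, hr, rfl⟩ := Multiset.mem_map.1 ha
    exact neg_nonneg.2 (hroots r hr)
  · rw [coeff_eq_zero_of_natDegree_lt hj]

theorem coeff_pos_of_roots_neg {p : ℝ[X]} (hp : p.Splits) (hlc : 0 < p.leadingCoeff)
    (hroots : ∀ r ∈ p.roots, r < 0) {j : ℕ} (hj : j ≤ p.natDegree) : 0 < p.coeff j := by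
  rw [coeff_eq_esymm_roots_of_splits hp hj, mul_assoc, ← Multiset.esymm_neg]
  refine mul_pos hlc (Multiset.esymm_pos (fun a ha => ?_) ?_)
  · obtain ⟨r, hr, rfl⟩ := Multiset.mem_map.1 ha
    exact neg_pos.2 (hroots r hr)
  · rw [Multiset.card_map, splits_iff_card_roots.1 hp]
    omega

theorem coeff_mul_pow_le_eval {p : ℝ[X]} (hp : ∀ j, 0 ≤ p.coeff j) {x : ℝ} (hx : 0 ≤ x)
    (i : ℕ) : p.coeff i * x ^ i ≤ p.eval x := by
  rw [eval_eq_sum_range' (Nat.lt_succ_iff.2 (le_max_left p.natDegree i))]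
  exact single_le_sum (fun j _ => mul_nonneg (hp j) (pow_nonneg hx j))
    (mem_range.2 (Nat.lt_succ_iff.2 (le_max_right _ _)))

theorem eval_pos_of_roots_lt {p : ℝ[X]} (hp : p.Splits) (hlc : 0 < p.leadingCoeff) {x : ℝ}
    (hroots : ∀ r ∈ p.roots, r < x) : 0 < p.eval x := by
  rw [hp.eval_eq_prod_roots]
  refine mul_pos hlc (Multiset.prod_pos fun a ha => ?_)
  obtain ⟨r, hr, rfl⟩ := Multiset.mem_map.1 ha
  exact sub_pos.2 (hroots r hr)

theorem eval_derivative_pos_of_roots_lt {p : ℝ[X]} (hp : p.Splits) (hlc : 0 < p.leadingCoeff)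
    (hne : p.roots ≠ 0) {x : ℝ} (hroots : ∀ r ∈ p.roots, r < x) :
    0 < (derivative p).eval x := by
  classical
  rw [hp.eval_derivative]
  refine mul_pos hlc (Multiset.sum_map_pos hne fun a _ => Multiset.prod_pos fun b hb => ?_)
  obtain ⟨r, hr, rfl⟩ := Multiset.mem_map.1 hb
  exact sub_pos.2 (hroots r (Multiset.mem_of_mem_erase hr))

theorem eval_nonpos_of_roots_derivative_le {p : ℝ[X]} (hp : p.Splits)
    (hlc : 0 < (derivative p).leadingCoeff) {β : ℝ} (hβ : (derivative p).IsRoot β)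
    (hmax : ∀ r ∈ (derivative p).roots, r ≤ β) : p.eval β ≤ 0 := by
  by_contra! hpos
  have hmono : StrictMonoOn (p.eval ·) (Set.Ici β) := by
    refine strictMonoOn_of_deriv_pos (convex_Ici β) p.continuous.continuousOn fun x hx => ?_
    rw [interior_Ici] at hx
    rw [Polynomial.deriv]
    exact eval_pos_of_roots_lt hp.derivative_of_real hlc fun r hr => (hmax r hr).trans_lt hx
  have hroots : ∀ r ∈ p.roots, r < β := fun r hr => by
    by_contra! hβr
    have := hmono.monotoneOn Set.self_mem_Ici hβr hβr
    rw [(mem_roots'.1 hr).2] at this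
    linarith
  have hlc_pos : 0 < p.leadingCoeff := by
    rw [hp.eval_eq_prod_roots] at hpos
    refine pos_of_mul_pos_left hpos (Multiset.prod_nonneg fun a ha => ?_)
    obtain ⟨r, hr, rfl⟩ := Multiset.mem_map.1 ha
    exact sub_nonneg.2 (hroots r hr).le
  have hne : p.roots ≠ 0 := fun h => by
    rw [hp.eq_prod_roots, h] at hlc
    simp at hlc
  exact (eval_derivative_pos_of_roots_lt hp hlc_pos hne hroots).ne' hβ

theorem iterate_derivative_X_add_C_mul {R : Type*} [CommSemiring R] (a : R) (p : R[X]) (m : ℕ) :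
    derivative^[m] ((X + C a) * p) = (X + C a) * derivative^[m] p + m • derivative^[m - 1] p := by
  rw [add_mul, iterate_map_add, mul_comm X, iterate_derivative_mul_X, iterate_derivative_C_mul]
  ring

noncomputable def prodXAddC {R : Type*} [CommSemiring R] (s : Multiset R) : R[X] :=
  (s.map fun r => X + C r).prod

theorem prodXAddC_cons {R : Type*} [CommSemiring R] (a : R) (s : Multiset R) :
    prodXAddC (a ::ₘ s) = (X + C a) * prodXAddC s := by
  rw [prodXAddC, Multiset.map_cons, Multiset.prod_cons, prodXAddC]

theorem splits_prodXAddC {R : Type*} [Field R] (s : Multiset R) : (prodXAddC s).Splits :=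
  Splits.multisetProd fun _ hp => by
    obtain ⟨r, -, rfl⟩ := Multiset.mem_map.1 hp
    exact Splits.X_add_C r

theorem natDegree_prodXAddC {R : Type*} [CommSemiring R] [Nontrivial R] (s : Multiset R) :
    (prodXAddC s).natDegree = Multiset.card s := by
  rw [prodXAddC, natDegree_multiset_prod_of_monic _ fun p hp => by
    obtain ⟨r, -, rfl⟩ := Multiset.mem_map.1 hp
    exact monic_X_add_C r]
  simp [Multiset.map_map]

theorem coeff_iterate_derivative_prodXAddC {R : Type*} [CommRing R] (s : Multiset R) {j m : ℕ}
    (h : j + m ≤ Multiset.card s) :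
    (derivative^[m] (prodXAddC s)).coeff j
      = (j + m).descFactorial m • s.esymm (Multiset.card s - (j + m)) := by
  rw [coeff_iterate_derivative, prodXAddC, Multiset.prod_X_add_C_coeff s h]

theorem natDegree_iterate_derivative_prodXAddC {R : Type*} [CommRing R] [IsDomain R] [CharZero R]
    (s : Multiset R) {m : ℕ} (hm : m ≤ Multiset.card s) :
    (derivative^[m] (prodXAddC s)).natDegree = Multiset.card s - m := by
  refine le_antisymm ((natDegree_iterate_derivative _ _).trans (natDegree_prodXAddC s ▸ le_rfl))
    (le_natDegree_of_ne_zero ?_)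
  rw [coeff_iterate_derivative_prodXAddC s (by omega), Nat.sub_add_cancel hm, Nat.sub_self,
    Multiset.esymm, Multiset.powersetCard_zero_left]
  simp [Nat.descFactorial_eq_zero_iff_lt, hm]

theorem leadingCoeff_iterate_derivative_prodXAddC_pos (s : Multiset ℝ) {m : ℕ}
    (hm : m ≤ Multiset.card s) : 0 < (derivative^[m] (prodXAddC s)).leadingCoeff := by
  rw [leadingCoeff, natDegree_iterate_derivative_prodXAddC s hm,
    coeff_iterate_derivative_prodXAddC s (by omega), Nat.sub_add_cancel hm, Nat.sub_self,
    Multiset.esymm, Multiset.powersetCard_zero_left]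
  simp [Nat.descFactorial_pos.2 hm]

theorem coeff_iterate_derivative_prodXAddC_sub (s : Multiset ℝ) {j k : ℕ}
    (hk : k ≤ Multiset.card s) (hj : j ≤ k) :
    (derivative^[Multiset.card s - k] (prodXAddC s)).coeff (k - j)
      = ((Multiset.card s - j).descFactorial (Multiset.card s - k) : ℝ) * s.esymm j := by
  rw [coeff_iterate_derivative_prodXAddC s (by omega), nsmul_eq_mul,
    show k - j + (Multiset.card s - k) = Multiset.card s - j by omega,
    Nat.sub_sub_self (hj.trans hk)]

/- At the largest root `β` of `D^m P`, `D^m ((X + a) P) = (X + a) D^m P + m D^(m-1) P` reduces to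
`m D^(m-1) P`, which is `≤ 0` by `eval_nonpos_of_roots_derivative_le`. -/
theorem roots_iterate_derivative_prodXAddC_nonpos {a : ℝ} {t : Multiset ℝ} {m : ℕ}
    (hm : m ≤ Multiset.card t)
    (hpos : ∀ x > 0, 0 < (derivative^[m] (prodXAddC (a ::ₘ t))).eval x) :
    ∀ r ∈ (derivative^[m] (prodXAddC t)).roots, r ≤ 0 := by
  by_contra! ⟨r, hr, hr0⟩
  obtain ⟨β, hβ, hmax⟩ := Multiset.exists_max_image (s := (derivative^[m] (prodXAddC t)).roots) id
    (by rintro h; simp [h] at hr)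
  have hβroot := (mem_roots'.1 hβ).2
  have hprev : (m : ℝ) * (derivative^[m - 1] (prodXAddC t)).eval β ≤ 0 := by
    rcases m with _ | m
    · simp
    have hderiv : derivative (derivative^[m] (prodXAddC t)) = derivative^[m + 1] (prodXAddC t) :=
      (Function.iterate_succ_apply' _ _ _).symm
    rw [Nat.add_sub_cancel]
    refine mul_nonpos_of_nonneg_of_nonpos (Nat.cast_nonneg _) <|
      eval_nonpos_of_roots_derivative_le ((splits_prodXAddC t).iterate_derivative_of_real _)
        ?_ ?_ ?_ <;> rw [hderiv]
    · exact leadingCoeff_iterate_derivative_prodXAddC_pos t hm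
    · exact hβroot
    · exact hmax
  have := hpos β (hr0.trans_le (hmax r hr))
  rw [prodXAddC_cons, iterate_derivative_X_add_C_mul, eval_add, eval_mul, hβroot.eq_zero, mul_zero,
    zero_add, eval_smul, nsmul_eq_mul] at this
  linarith

end Polynomial

open Polynomial

def closedGardingCone (k : ℕ) : Set (Multiset ℝ) := {s | ∀ j ≤ k, 0 ≤ s.esymm j}

theorem mem_closedGardingCone_iff_coeff_nonneg {s : Multiset ℝ} {k : ℕ}
    (hk : k ≤ Multiset.card s) :
    s ∈ closedGardingCone k ↔
      ∀ i, 0 ≤ (derivative^[Multiset.card s - k] (prodXAddC s)).coeff i := by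
  refine ⟨fun hs i => ?_, fun h j hj => ?_⟩
  · rcases le_or_gt i k with hi | hi
    · rw [← Nat.sub_sub_self hi, coeff_iterate_derivative_prodXAddC_sub s hk (Nat.sub_le k i)]
      exact mul_nonneg (Nat.cast_nonneg _) (hs _ (Nat.sub_le k i))
    · rw [coeff_eq_zero_of_natDegree_lt (by
        rw [natDegree_iterate_derivative_prodXAddC s (by omega)]; omega)]
  · have := h (k - j)
    rw [coeff_iterate_derivative_prodXAddC_sub s hk hj] at this
    exact nonneg_of_mul_nonneg_right this (by exact_mod_cast Nat.descFactorial_pos.2 (by omega))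

theorem mem_closedGardingCone_of_cons {a : ℝ} {t : Multiset ℝ} {k : ℕ}
    (hk : k ≤ Multiset.card t) (h : a ::ₘ t ∈ closedGardingCone (k + 1)) :
    t ∈ closedGardingCone k := by
  have hcard : Multiset.card (a ::ₘ t) - (k + 1) = Multiset.card t - k := by simp
  rw [mem_closedGardingCone_iff_coeff_nonneg (by simpa using hk), hcard] at h
  have hpos : ∀ x > 0, 0 < (derivative^[Multiset.card t - k] (prodXAddC (a ::ₘ t))).eval x := by
    intro x hx
    have hlc := leadingCoeff_iterate_derivative_prodXAddC_pos (a ::ₘ t) (m := Multiset.card t - k)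
      (by simp; omega)
    exact (mul_pos hlc (pow_pos hx _)).trans_le (coeff_mul_pow_le_eval h hx.le _)
  rw [mem_closedGardingCone_iff_coeff_nonneg hk]
  exact coeff_nonneg_of_roots_nonpos ((splits_prodXAddC t).iterate_derivative_of_real _)
    (leadingCoeff_iterate_derivative_prodXAddC_pos t (Nat.sub_le _ _)).le
    (roots_iterate_derivative_prodXAddC_nonpos (Nat.sub_le _ _) hpos)

theorem esymm_pos_of_mem_closedGardingCone {s : Multiset ℝ} {k : ℕ} (hk : k ≤ Multiset.card s)
    (hs : s ∈ closedGardingCone k) (hsk : 0 < s.esymm k) {j : ℕ} (hj : j ≤ k) :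
    0 < s.esymm j := by
  set q := derivative^[Multiset.card s - k] (prodXAddC s)
  have hcoeff := (mem_closedGardingCone_iff_coeff_nonneg hk).1 hs
  have hq0 : 0 < q.coeff 0 := by
    rw [← Nat.sub_self k, coeff_iterate_derivative_prodXAddC_sub s hk le_rfl]
    exact mul_pos (by exact_mod_cast Nat.descFactorial_pos.2 (by omega)) hsk
  have hroots : ∀ r ∈ q.roots, r < 0 := fun r hr => by
    by_contra! hr0
    have := coeff_mul_pow_le_eval hcoeff hr0 0
    rw [pow_zero, mul_one, (mem_roots'.1 hr).2] at this
    linarith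
  have := coeff_pos_of_roots_neg ((splits_prodXAddC s).iterate_derivative_of_real _)
    (leadingCoeff_iterate_derivative_prodXAddC_pos s (Nat.sub_le _ _)) hroots
    (j := k - j) (by rw [natDegree_iterate_derivative_prodXAddC s (Nat.sub_le _ _)]; omega)
  rw [coeff_iterate_derivative_prodXAddC_sub s hk hj] at this
  exact pos_of_mul_pos_right this (Nat.cast_nonneg _)

theorem esymm_cons_le_esymm_cons {a b : ℝ} {t : Multiset ℝ} {k : ℕ}
    (hk : k ≤ Multiset.card t + 1) (h : a ::ₘ t ∈ closedGardingCone k) (hab : a ≤ b) {j : ℕ}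
    (hj : j ≤ k) : (a ::ₘ t).esymm j ≤ (b ::ₘ t).esymm j := by
  rcases j with _ | j
  · simp [Multiset.esymm, Multiset.powersetCard_zero_left]
  obtain ⟨k, rfl⟩ : ∃ k', k = k' + 1 := ⟨k - 1, by omega⟩
  have ht := mem_closedGardingCone_of_cons (by omega) h j (by omega)
  rw [Multiset.esymm_cons_succ, Multiset.esymm_cons_succ]
  linarith [mul_le_mul_of_nonneg_right hab ht]

theorem esymm_le_esymm_of_rel {s t : Multiset ℝ} (hst : s.Rel (· ≤ ·) t) {k : ℕ}
    (hk : k ≤ Multiset.card s) (hs : s ∈ closedGardingCone k) {j : ℕ} (hj : j ≤ k) :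
    s.esymm j ≤ t.esymm j := by
  suffices ∀ u, k ≤ Multiset.card (u + s) → u + s ∈ closedGardingCone k →
      ∀ j ≤ k, (u + s).esymm j ≤ (u + t).esymm j by
    simpa using this 0 (by simpa using hk) (by simpa using hs) j hj
  clear hk hs hj j
  induction hst with
  | zero => exact fun _ _ _ _ _ => le_rfl
  | @cons a b s t hab _ ih =>
    intro u hk hs j hj
    rw [Multiset.add_cons] at hk hs ⊢
    rw [Multiset.add_cons]
    have step := fun i hi => esymm_cons_le_esymm_cons (by simpa using hk) hs hab (j := i) hi
    have hs' : b ::ₘ (u + s) ∈ closedGardingCone k := fun i hi => (hs i hi).trans (step i hi)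
    have := ih (b ::ₘ u)
    simp only [Multiset.cons_add, Multiset.card_cons] at this
    exact (step j hj).trans (this (by simpa using hk) hs' j hj)

theorem esymmVec_eq_esymm (n k : ℕ) (x : Fin n → ℝ) :
    esymmVec n k x = (univ.val.map x).esymm k :=
  (Finset.esymm_map_val x univ k).symm

theorem mem_closedGardingCone_of_mem_gammaPlus {n k : ℕ} (hkn : k ≤ n) {x : Fin n → ℝ}
    (hx : x ∈ GammaPlus n k) : univ.val.map x ∈ closedGardingCone k := by
  have hcont (j : ℕ) : Continuous fun y : Fin n → ℝ => (univ.val.map y).esymm j := by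
    simp only [Finset.esymm_map_val]
    fun_prop
  set U := ⋂ j ∈ range (k + 1), {y : Fin n → ℝ | 0 < (univ.val.map y).esymm j}
  set K := ⋂ j ∈ range (k + 1), {y : Fin n → ℝ | 0 ≤ (univ.val.map y).esymm j}
  have hK_iff (y : Fin n → ℝ) : y ∈ K ↔ univ.val.map y ∈ closedGardingCone k := by
    simp [K, closedGardingCone]
  have hU : IsOpen U := isOpen_biInter_finset fun j _ => isOpen_lt continuous_const (hcont j)
  have hK : IsClosed K := isClosed_biInter fun j _ => isClosed_le continuous_const (hcont j)
  have hUK : U ⊆ K := Set.iInter₂_mono fun _ _ => Set.ofPred_subset_ofPred.2 fun _ => le_of_lt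
  have hsub : GammaPlus n k ⊆ U ∪ Kᶜ := by
    intro y hy
    by_cases hyK : y ∈ K
    · have hyk : y ∈ {y | 0 < esymmVec n k y} := connectedComponentIn_subset _ _ hy
      rw [Set.mem_ofPred_eq, esymmVec_eq_esymm] at hyk
      refine Or.inl (Set.mem_iInter₂.2 fun j hj => ?_)
      exact esymm_pos_of_mem_closedGardingCone (by simpa using hkn) ((hK_iff y).1 hyK) hyk
        (Nat.lt_succ_iff.1 (mem_range.1 hj))
    · exact Or.inr hyK
  have hone : (fun _ => (1 : ℝ)) ∈ U := Set.mem_iInter₂.2 fun j hj =>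
    Multiset.esymm_pos (s := univ.val.map fun _ : Fin n => (1 : ℝ))
      (fun a ha => (Multiset.eq_of_mem_map_const ha).symm ▸ one_pos)
      (by simp only [Multiset.card_map, card_val, card_univ, Fintype.card_fin]; simp at hj; omega)
  have hone' : (fun _ => (1 : ℝ)) ∈ GammaPlus n k := by
    refine mem_connectedComponentIn ?_
    rw [Set.mem_ofPred_eq, esymmVec_eq_esymm]
    exact Set.mem_iInter₂.1 hone k (self_mem_range_succ k)
  exact (hK_iff x).1 <| hUK <| isPreconnected_connectedComponentIn.subset_left_of_subset_union
    hU hK.isOpen_compl (Set.disjoint_compl_right_iff_subset.2 hUK) hsub ⟨_, hone', hone⟩ hx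

section
open Module RCLike
open scoped ComplexOrder

namespace OrthonormalBasis

variable {ι 𝕜 E : Type*} [Fintype ι] [RCLike 𝕜] [NormedAddCommGroup E] [InnerProductSpace 𝕜 E]

theorem inner_eq_zero_of_mem_span (b : OrthonormalBasis ι 𝕜 E) {s : Set ι} {x : E}
    (hx : x ∈ Submodule.span 𝕜 (b '' s)) {i : ι} (hi : i ∉ s) : inner 𝕜 (b i) x = 0 := by
  have : Submodule.span 𝕜 (b '' s) ≤ LinearMap.ker (innerₛₗ 𝕜 (b i)) := by
    refine Submodule.span_le.2 ?_
    rintro _ ⟨j, hj, rfl⟩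
    exact b.orthonormal.inner_eq_zero (ne_of_mem_of_not_mem hj hi).symm
  exact this hx

theorem finrank_span_image (b : OrthonormalBasis ι 𝕜 E) (s : Finset ι) :
    finrank 𝕜 (Submodule.span 𝕜 (b '' s)) = s.card := by
  rw [Set.image_eq_range]
  exact (finrank_span_eq_card (b.orthonormal.linearIndependent.comp _ Subtype.val_injective)).trans
    (by simp)

end OrthonormalBasis

namespace LinearMap.IsSymmetric

variable {𝕜 E : Type*} [RCLike 𝕜] [NormedAddCommGroup E] [InnerProductSpace 𝕜 E]
  [FiniteDimensional 𝕜 E] {n : ℕ} {S T : E →ₗ[𝕜] E}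

theorem re_inner_apply_self_eq_sum (hT : T.IsSymmetric) (hn : finrank 𝕜 E = n) (x : E) :
    re (inner 𝕜 (T x) x)
      = ∑ i, hT.eigenvalues hn i * ‖inner 𝕜 (hT.eigenvectorBasis hn i) x‖ ^ 2 := by
  rw [← (hT.eigenvectorBasis hn).repr.inner_map_map, PiLp.inner_apply, map_sum]
  refine Finset.sum_congr rfl fun i _ => ?_
  rw [eigenvectorBasis_apply_self_apply, OrthonormalBasis.repr_apply_apply, RCLike.inner_apply,
    map_mul (starRingEnd 𝕜), conj_ofReal, mul_left_comm, mul_conj, ← ofReal_pow, ← ofReal_mul,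
    ofReal_re]

theorem mul_norm_sq_le_re_inner_apply_self (hT : T.IsSymmetric) (hn : finrank 𝕜 E = n)
    {s : Set (Fin n)} {c : ℝ} (hc : ∀ i ∈ s, c ≤ hT.eigenvalues hn i) {x : E}
    (hx : x ∈ Submodule.span 𝕜 (hT.eigenvectorBasis hn '' s)) :
    c * ‖x‖ ^ 2 ≤ re (inner 𝕜 (T x) x) := by
  rw [re_inner_apply_self_eq_sum, ← (hT.eigenvectorBasis hn).sum_sq_norm_inner_right, mul_sum]
  refine sum_le_sum fun i _ => ?_
  by_cases hi : i ∈ s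
  · exact mul_le_mul_of_nonneg_right (hc i hi) (by positivity)
  · simp [(hT.eigenvectorBasis hn).inner_eq_zero_of_mem_span hx hi]

theorem re_inner_apply_self_le_mul_norm_sq (hT : T.IsSymmetric) (hn : finrank 𝕜 E = n)
    {s : Set (Fin n)} {c : ℝ} (hc : ∀ i ∈ s, hT.eigenvalues hn i ≤ c) {x : E}
    (hx : x ∈ Submodule.span 𝕜 (hT.eigenvectorBasis hn '' s)) :
    re (inner 𝕜 (T x) x) ≤ c * ‖x‖ ^ 2 := by
  rw [re_inner_apply_self_eq_sum, ← (hT.eigenvectorBasis hn).sum_sq_norm_inner_right, mul_sum]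
  refine sum_le_sum fun i _ => ?_
  by_cases hi : i ∈ s
  · exact mul_le_mul_of_nonneg_right (hc i hi) (by positivity)
  · simp [(hT.eigenvectorBasis hn).inner_eq_zero_of_mem_span hx hi]

theorem eigenvalues_le_of_le (hS : S.IsSymmetric) (hT : T.IsSymmetric) (hST : S ≤ T)
    (hn : finrank 𝕜 E = n) (i : Fin n) : hS.eigenvalues hn i ≤ hT.eigenvalues hn i := by
  set VS := Submodule.span 𝕜 (hS.eigenvectorBasis hn '' ↑(Iic i))
  set VT := Submodule.span 𝕜 (hT.eigenvectorBasis hn '' ↑(Ici i))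
  obtain ⟨x, hxS, hxT, hx0⟩ : ∃ x ∈ VS, x ∈ VT ∧ x ≠ 0 := by
    by_contra! h
    have := Submodule.finrank_add_finrank_le_of_disjoint (Submodule.disjoint_def.2 h)
    rw [(hS.eigenvectorBasis hn).finrank_span_image, (hT.eigenvectorBasis hn).finrank_span_image,
      Fin.card_Iic, Fin.card_Ici, hn] at this
    omega
  have hST' : re (inner 𝕜 (S x) x) ≤ re (inner 𝕜 (T x) x) := by
    have := hST.re_inner_nonneg_left x
    rwa [sub_apply, inner_sub_left, map_sub, sub_nonneg] at this
  have := (hS.mul_norm_sq_le_re_inner_apply_self hn (fun j hj =>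
      hS.eigenvalues_antitone hn (mem_Iic.1 hj)) hxS).trans <|
    hST'.trans (hT.re_inner_apply_self_le_mul_norm_sq hn (fun j hj =>
      hT.eigenvalues_antitone hn (mem_Ici.1 hj)) hxT)
  exact le_of_mul_le_mul_right this (by positivity)

end LinearMap.IsSymmetric

theorem Matrix.IsHermitian.eigenvalues₀_le_eigenvalues₀_add {m 𝕜 : Type*} [Fintype m]
    [DecidableEq m] [RCLike 𝕜] {A B : Matrix m m 𝕜} (hA : A.PosSemidef) (hB : B.IsHermitian)
    (hAB : (A + B).IsHermitian) (i : Fin (Fintype.card m)) :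
    hB.eigenvalues₀ i ≤ hAB.eigenvalues₀ i := by
  refine LinearMap.IsSymmetric.eigenvalues_le_of_le _ _ ?_ _ i
  rw [LinearMap.le_def, map_add, add_sub_cancel_right]
  exact Matrix.isPositive_toEuclideanLin_iff.2 hA

theorem Matrix.IsHermitian.univ_val_map_eigenvalues {m 𝕜 : Type*} [Fintype m] [DecidableEq m]
    [RCLike 𝕜] {A : Matrix m m 𝕜} (hA : A.IsHermitian) :
    univ.val.map hA.eigenvalues = univ.val.map hA.eigenvalues₀ := by
  change univ.val.map (hA.eigenvalues₀ ∘ _) = _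
  rw [← Multiset.map_map, ← Equiv.coe_toEmbedding, ← Finset.map_val, Finset.map_univ_equiv]

end

theorem sigmaM_le_sigmaM_add {n k : ℕ} (hkn : k ≤ n) {A B : Matrix (Fin n) (Fin n) ℝ}
    (hA : A.PosSemidef) (hB : InGammaPlus n k B) : sigmaM n k B ≤ sigmaM n k (A + B) := by
  obtain ⟨hBh, hBΓ⟩ := hB
  have hABh := hA.isHermitian.add hBh
  have hcone := mem_closedGardingCone_of_mem_gammaPlus hkn hBΓ
  rw [hBh.univ_val_map_eigenvalues] at hcone
  rw [sigmaM, dif_pos hBh, sigmaM, dif_pos hABh, esymmVec_eq_esymm, esymmVec_eq_esymm,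
    hBh.univ_val_map_eigenvalues, hABh.univ_val_map_eigenvalues]
  refine esymm_le_esymm_of_rel (Multiset.rel_map.2 (Multiset.rel_refl_of_refl_on fun i _ =>
    hBh.eigenvalues₀_le_eigenvalues₀_add hA hABh i)) (by simpa using hkn) hcone le_rfl

theorem sigma_monotone_general (n k : ℕ) (hkn : k ≤ n)
    (A B : Matrix (Fin n) (Fin n) ℝ)
    (hB : InGammaPlus n k B) (hAB : InGammaPlus n k (A + B)) :
    (A.PosSemidef → sigmaM n k B ≤ sigmaM n k (A + B)) ∧
      ((-A).PosSemidef → sigmaM n k (A + B) ≤ sigmaM n k B) :=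
  ⟨fun hA => sigmaM_le_sigmaM_add hkn hA hB,
    fun hA => by simpa using sigmaM_le_sigmaM_add hkn hA hAB⟩

/-- Monotonicity of `σ_k`: if `B ∈ Γ_k^+` and `A + B ∈ Γ_k^+`, then
`σ_k(A + B) ≥ σ_k(B)` when `A` is positive semi-definite, and
`σ_k(A + B) ≤ σ_k(B)` when `A` is negative semi-definite. -/
theorem sigma_monotone (n k : ℕ) (hk1 : 1 ≤ k) (hkn : k ≤ n)
    (A B : Matrix (Fin n) (Fin n) ℝ) (hAh : A.IsHermitian)
    (hB : InGammaPlus n k B) (hAB : InGammaPlus n k (A + B)) :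
    (A.PosSemidef → sigmaM n k B ≤ sigmaM n k (A + B)) ∧
      ((-A).PosSemidef → sigmaM n k (A + B) ≤ sigmaM n k B) :=
  sigma_monotone_general n k hkn A B hB hAB
end

section
/- Let k ≥ 2 and let A be a symmetric matrix with eigenvalues in Γ_k^+. If σ_k(A) ≥ c_1 > 0 and σ_{k-1}(A) ≤ c_2, then there exists C = C(c_1, c_2, n, k) such that every eigenvalue λ of A satisfies |λ| ≤ C. -/
open Finset Matrix

/-!
Differentiating `∏ (X + xᵢ)` exactly `n - k` times leaves a degree-`k` polynomial that is real-rooted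
by Rolle and whose coefficients are positive multiples of `σ₀(x), …, σₖ(x)`; writing `μ₁, …, μₖ`
for its negated roots, `σⱼ(x) / C(n, j) = eⱼ(μ) / C(k, j)`. If `σₖ(x) > 0` and `σ₁(x), …, σₖ(x) ≥ 0`,
all coefficients are nonnegative, so every `μᵢ > 0` and then every `σⱼ(x) > 0`. Hence
`{σ₁, …, σₖ > 0}` is relatively clopen in `{σₖ > 0}` and contains `Γₖ⁺`.

For `x ∈ Γₖ⁺` the bounds `σₖ ≥ c₁` and `σₖ₋₁ ≤ c₂` become `∏ μᵢ ≥ a` and `eₖ₋₁(μ) ≤ b`. Then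
`μᵢ ≥ ∏ μ / eₖ₋₁(μ) ≥ a / b` for every `i`, and `μᵢ` times `k - 2` further roots is at most `b`,
which bounds each `μᵢ`, hence `σ₁(x)`, from above. Finally `σ₂(x) ≥ 0` gives
`∑ xᵢ² = σ₁(x)² - 2 σ₂(x) ≤ σ₁(x)²`.
-/

open Polynomial

namespace Polynomial

theorem Splits.derivative {p : ℝ[X]} (hp : p.Splits) : (Polynomial.derivative p).Splits := by
  rw [splits_iff_card_roots] at hp ⊢
  have := card_roots_le_derivative p
  have := natDegree_derivative_le p
  have := card_roots' (Polynomial.derivative p)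
  omega

theorem Splits.iterate_derivative {p : ℝ[X]} (hp : p.Splits) (m : ℕ) :
    (Polynomial.derivative^[m] p).Splits := by
  induction m with
  | zero => exact hp
  | succ m ih => rw [Function.iterate_succ_apply']; exact ih.derivative

theorem neg_of_mem_roots_of_coeff_nonneg {p : ℝ[X]} (hnn : ∀ i, 0 ≤ p.coeff i)
    (h0 : 0 < p.coeff 0) {r : ℝ} (hr : r ∈ p.roots) : r < 0 := by
  by_contra! hr0
  have : 0 < p.eval r := by
    rw [eval_eq_sum_range]
    calc 0 < p.coeff 0 * r ^ 0 := by simpa using h0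
      _ ≤ _ := single_le_sum (fun i _ => mul_nonneg (hnn i) (pow_nonneg hr0 i)) (by simp)
  exact this.ne' (isRoot_of_mem_roots hr)

end Polynomial

theorem Nat.descFactorial_sub_mul_choose {n k j : ℕ} (hjk : j ≤ k) (hkn : k ≤ n) :
    (n - j).descFactorial (n - k) * n.choose j = n.descFactorial (n - k) * k.choose j := by
  rw [descFactorial_eq_factorial_mul_choose, descFactorial_eq_factorial_mul_choose,
    choose_symm hkn, mul_assoc, mul_assoc, choose_mul (n := n) hjk, mul_comm (n.choose j),
    choose_symm_of_eq_add (by omega : n - j = k - j + (n - k))]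

namespace Multiset

theorem prod_le_esymm {μ t : Multiset ℝ} (hnn : ∀ r ∈ μ, 0 ≤ r) (ht : t ≤ μ) :
    t.prod ≤ μ.esymm (card t) := by
  refine single_le_sum (fun y hy => ?_) _ (mem_map_of_mem _ (mem_powersetCard.mpr ⟨ht, rfl⟩))
  obtain ⟨u, hu, rfl⟩ := mem_map.mp hy
  exact prod_nonneg fun r hr => hnn r (mem_of_le (mem_powersetCard.mp hu).1 hr)

theorem esymm_pos_s7 {μ : Multiset ℝ} (hpos : ∀ r ∈ μ, 0 < r) {j : ℕ} (hj : j ≤ card μ) :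
    0 < μ.esymm j := by
  obtain ⟨t, ht⟩ : ∃ t, t ∈ powersetCard j μ := card_pos_iff_exists_mem.mp <| by
    rw [card_powersetCard]; exact Nat.choose_pos hj
  obtain ⟨htμ, rfl⟩ := mem_powersetCard.mp ht
  exact (prod_pos fun r hr => hpos r (mem_of_le htμ hr)).trans_le
    (prod_le_esymm (fun r hr => (hpos r hr).le) htμ)

theorem esymm_card {R : Type*} [CommSemiring R] (μ : Multiset R) : μ.esymm (card μ) = μ.prod := by
  simp [esymm, powersetCard_self]

theorem coeff_iterate_derivative_prod_X_add_C {R : Type*} [CommSemiring R] (s : Multiset R)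
    {j k : ℕ} (hjk : j ≤ k) (hk : k ≤ card s) :
    (derivative^[card s - k] (s.map fun r => X + C r).prod).coeff (k - j)
      = (card s - j).descFactorial (card s - k) • s.esymm j := by
  rw [coeff_iterate_derivative, prod_X_add_C_coeff s (by omega),
    show k - j + (card s - k) = card s - j by omega, Nat.sub_sub_self (by omega)]

theorem natDegree_iterate_derivative_prod_X_add_C (s : Multiset ℝ) {k : ℕ} (hk : k ≤ card s) :
    (derivative^[card s - k] (s.map fun r => X + C r).prod).natDegree = k := by
  have hP : (s.map fun r => X + C r).prod.natDegree = card s := by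
    rw [natDegree_multiset_prod_of_monic _ fun f hf => ?_]
    · simp
    · obtain ⟨r, -, rfl⟩ := mem_map.mp hf; exact monic_X_add_C r
  refine natDegree_eq_of_le_of_coeff_ne_zero ?_ ?_
  · have := natDegree_iterate_derivative (s.map fun r => X + C r).prod (card s - k)
    omega
  · have := coeff_iterate_derivative_prod_X_add_C s (Nat.zero_le k) hk
    simp only [Nat.sub_zero, esymm, powersetCard_zero_left, map_singleton, prod_zero,
      sum_singleton, nsmul_one] at this
    rw [this, Nat.cast_ne_zero, Ne, Nat.descFactorial_eq_zero_iff_lt]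
    omega

theorem exists_pos_choose_mul_esymm_eq {s : Multiset ℝ} {k : ℕ} (hk : k ≤ card s)
    (hnn : ∀ j ≤ k, 0 ≤ s.esymm j) (hpos : 0 < s.esymm k) :
    ∃ μ : Multiset ℝ, card μ = k ∧ (∀ r ∈ μ, 0 < r) ∧
      ∀ j ≤ k, k.choose j * s.esymm j = (card s).choose j * μ.esymm j := by
  set n := card s
  set q := derivative^[n - k] (s.map fun r => X + C r).prod
  have hcoeff : ∀ j ≤ k, q.coeff (k - j) = (n - j).descFactorial (n - k) * s.esymm j :=
    fun j hj => by rw [coeff_iterate_derivative_prod_X_add_C s hj hk, nsmul_eq_mul]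
  have hD : ∀ j ≤ k, (0 : ℝ) < (n - j).descFactorial (n - k) := fun j hj => by
    exact_mod_cast Nat.pos_of_ne_zero (by rw [Ne, Nat.descFactorial_eq_zero_iff_lt]; omega)
  have hlc : q.coeff k = n.descFactorial (n - k) := by
    simpa [esymm] using hcoeff 0 (Nat.zero_le k)
  have hdeg : q.natDegree = k := natDegree_iterate_derivative_prod_X_add_C s hk
  have hsplit : q.Splits := Splits.iterate_derivative (Splits.multisetProd fun f hf => by
    obtain ⟨r, -, rfl⟩ := mem_map.mp hf
    exact Splits.of_natDegree_le_one (by simp)) _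
  have hneg : ∀ r ∈ q.roots, r < 0 := by
    refine fun r => neg_of_mem_roots_of_coeff_nonneg (fun i => ?_) ?_
    · rcases le_or_gt i k with hi | hi
      · rw [← Nat.sub_sub_self hi, hcoeff _ (Nat.sub_le k i)]
        exact mul_nonneg (by positivity) (hnn _ (Nat.sub_le k i))
      · rw [coeff_eq_zero_of_natDegree_lt (hdeg ▸ hi)]
    · rw [← k.sub_self, hcoeff k le_rfl]; exact mul_pos (hD k le_rfl) hpos
  refine ⟨q.roots.map Neg.neg, ?_, ?_, fun j hj => ?_⟩
  · rw [card_map, splits_iff_card_roots.mp hsplit, hdeg]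
  · intro r hr
    obtain ⟨r, hr', rfl⟩ := mem_map.mp hr
    exact neg_pos.mpr (hneg r hr')
  · have hvieta := coeff_eq_esymm_roots_of_splits hsplit (k := k - j) (by omega)
    rw [hdeg, leadingCoeff, hdeg, hlc, hcoeff j hj, Nat.sub_sub_self hj] at hvieta
    have hchoose := congrArg (Nat.cast (R := ℝ)) (Nat.descFactorial_sub_mul_choose hj hk)
    push_cast at hchoose
    rw [esymm_neg]
    refine mul_left_cancel₀ (hD 0 k.zero_le).ne' ?_
    linear_combination (n.choose j : ℝ) * hvieta - s.esymm j * hchoose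

theorem esymm_pos_of_esymm_nonneg {s : Multiset ℝ} {k : ℕ} (hk : k ≤ card s)
    (hnn : ∀ j ≤ k, 0 ≤ s.esymm j) (hpos : 0 < s.esymm k) {j : ℕ} (hj : j ≤ k) :
    0 < s.esymm j := by
  obtain ⟨μ, hcard, hμ, hrel⟩ := exists_pos_choose_mul_esymm_eq hk hnn hpos
  have hpos_mul : 0 < (k.choose j : ℝ) * s.esymm j := by
    rw [hrel j hj]
    exact mul_pos (by exact_mod_cast Nat.choose_pos (hj.trans hk)) (esymm_pos_s7 hμ (hcard ▸ hj))
  exact pos_of_mul_pos_right hpos_mul (by positivity)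

theorem prod_le_mul_esymm {μ : Multiset ℝ} (hnn : ∀ r ∈ μ, 0 ≤ r) {r : ℝ} (hr : r ∈ μ) :
    μ.prod ≤ r * μ.esymm (card μ - 1) := by
  rw [← prod_erase hr, ← Nat.pred_eq_sub_one, ← card_erase_of_mem hr]
  exact mul_le_mul_of_nonneg_left (prod_le_esymm hnn (erase_le r μ)) (hnn r hr)

theorem mul_prod_pow_le_esymm_pow {μ : Multiset ℝ} (hpos : ∀ r ∈ μ, 0 < r)
    (hμ : 2 ≤ card μ) {r : ℝ} (hr : r ∈ μ) :
    r * μ.prod ^ (card μ - 2) ≤ μ.esymm (card μ - 1) ^ (card μ - 1) := by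
  have hnn : ∀ r ∈ μ, 0 ≤ r := fun r hr => (hpos r hr).le
  set E := μ.esymm (card μ - 1)
  have hE : 0 ≤ E := (esymm_pos_s7 hpos (by omega)).le
  have hcard : card (μ.erase r) = card μ - 1 := by rw [card_erase_of_mem hr]; rfl
  obtain ⟨s, hs⟩ := card_pos_iff_exists_mem.mp (show 0 < card (μ.erase r) by omega)
  set t := (μ.erase r).erase s
  have hct : card t = card μ - 2 := by rw [card_erase_of_mem hs, hcard, Nat.pred_eq_sub_one]; omega
  have htμ : t ≤ μ := (erase_le s _).trans (erase_le r μ)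
  have hrt : r * t.prod ≤ E := by
    have hle : r ::ₘ t ≤ μ := (cons_le_cons r (erase_le s _)).trans (cons_erase hr).le
    simpa [hct, show card μ - 2 + 1 = card μ - 1 by omega] using prod_le_esymm hnn hle
  have hPt : μ.prod ^ (card μ - 2) ≤ t.prod * E ^ (card μ - 2) := by
    rw [← hct]
    calc μ.prod ^ card t = (t.map fun _ => μ.prod).prod := by simp [map_const']
      _ ≤ (t.map fun y => y * E).prod := prod_map_le_prod_map₀ _ _
          (fun _ _ => prod_nonneg hnn) fun y hy => prod_le_mul_esymm hnn (mem_of_le htμ hy)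
      _ = t.prod * E ^ card t := by simp [prod_map_mul, map_const']
  calc r * μ.prod ^ (card μ - 2) ≤ r * (t.prod * E ^ (card μ - 2)) :=
        mul_le_mul_of_nonneg_left hPt (hnn r hr)
    _ = r * t.prod * E ^ (card μ - 2) := by ring
    _ ≤ E * E ^ (card μ - 2) := mul_le_mul_of_nonneg_right hrt (pow_nonneg hE _)
    _ = E ^ (card μ - 1) := by rw [← pow_succ']; congr 1; omega

theorem sum_le_of_le_prod_of_esymm_le {μ : Multiset ℝ} (hpos : ∀ r ∈ μ, 0 < r)
    (hμ : 2 ≤ card μ) {a b : ℝ} (ha : 0 < a) (haP : a ≤ μ.prod)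
    (hEb : μ.esymm (card μ - 1) ≤ b) :
    μ.sum ≤ card μ * (b ^ (card μ - 1) / a ^ (card μ - 2)) := by
  rw [← nsmul_eq_mul]
  refine sum_le_card_nsmul μ _ fun r hr => ?_
  have hE : 0 ≤ μ.esymm (card μ - 1) := (esymm_pos_s7 hpos (by omega)).le
  calc r ≤ μ.esymm (card μ - 1) ^ (card μ - 1) / μ.prod ^ (card μ - 2) :=
        (le_div_iff₀ (pow_pos (ha.trans_le haP) _)).mpr (mul_prod_pow_le_esymm_pow hpos hμ hr)
    _ ≤ b ^ (card μ - 1) / a ^ (card μ - 2) :=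
        div_le_div₀ (pow_nonneg (hE.trans hEb) _) (pow_le_pow_left₀ hE hEb _)
          (pow_pos ha _) (pow_le_pow_left₀ ha.le haP _)

end Multiset

theorem continuous_esymmVec (n k : ℕ) : Continuous (esymmVec n k) := by
  unfold esymmVec; fun_prop

theorem le_of_esymmVec_pos {n k : ℕ} {x : Fin n → ℝ} (h : 0 < esymmVec n k x) : k ≤ n := by
  by_contra! hnk
  rw [esymmVec, (powersetCard_eq_empty (s := univ)).mpr (by simpa using hnk), sum_empty] at h
  exact h.false

theorem esymmVec_ones (n k : ℕ) : esymmVec n k (fun _ => 1) = n.choose k := by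
  simp [esymmVec, card_powersetCard]

theorem esymmVec_pos_of_esymmVec_nonneg {n k : ℕ} {x : Fin n → ℝ} (hk : 0 < esymmVec n k x)
    (hnn : ∀ j ≤ k, 0 ≤ esymmVec n j x) {j : ℕ} (hj : j ≤ k) : 0 < esymmVec n j x := by
  have hkn : k ≤ (univ.val.map x).card := by simpa using le_of_esymmVec_pos hk
  simp only [esymmVec_eq_esymm] at hk hnn ⊢
  exact Multiset.esymm_pos_of_esymm_nonneg hkn hnn hk hj

theorem esymmVec_pos_of_mem_gammaPlus {n k : ℕ} {x : Fin n → ℝ} (hx : x ∈ GammaPlus n k)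
    {j : ℕ} (hj : j ≤ k) : 0 < esymmVec n j x := by
  let S := {x : Fin n → ℝ | 0 < esymmVec n k x}
  let U := ⋂ j ∈ range (k + 1), {x : Fin n → ℝ | 0 < esymmVec n j x}
  let V := ⋃ j ∈ range (k + 1), {x : Fin n → ℝ | esymmVec n j x < 0}
  have hkn : k ≤ n := le_of_esymmVec_pos (connectedComponentIn_subset S _ hx)
  have hU : IsOpen U :=
    isOpen_biInter_finset fun j _ => isOpen_lt continuous_const (continuous_esymmVec n j)
  have hV : IsOpen V :=
    isOpen_biUnion fun j _ => isOpen_lt (continuous_esymmVec n j) continuous_const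
  have hUV : Disjoint U V := by
    refine Set.disjoint_left.mpr fun y hyU hyV => ?_
    simp only [U, V, Set.mem_iInter, Set.mem_iUnion, Set.mem_ofPred_eq] at hyU hyV
    obtain ⟨i, hi, hyi⟩ := hyV
    exact (hyU i hi).not_gt hyi
  have hSUV : S ⊆ U ∪ V := by
    intro y hy
    by_cases hyV : y ∈ V
    · exact Or.inr hyV
    · simp only [V, Set.mem_iUnion, Set.mem_ofPred_eq, mem_range, Order.lt_add_one_iff,
        not_exists, not_lt] at hyV
      simp only [U, Set.mem_union, Set.mem_iInter, Set.mem_ofPred_eq, mem_range]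
      exact Or.inl fun i hi => esymmVec_pos_of_esymmVec_nonneg hy hyV (by omega)
  have hone : ∀ i ≤ n, 0 < esymmVec n i (fun _ => 1) := fun i hi => by
    rw [esymmVec_ones]; exact_mod_cast Nat.choose_pos hi
  have honeU : (fun _ => (1 : ℝ)) ∈ U := by
    simp only [U, Set.mem_iInter, Set.mem_ofPred_eq, mem_range]
    exact fun i hi => hone i (by omega)
  have hxU := isPreconnected_connectedComponentIn.subset_left_of_subset_union hU hV hUV
    ((connectedComponentIn_subset _ _).trans hSUV)
    ⟨_, mem_connectedComponentIn (show (fun _ => (1 : ℝ)) ∈ S from hone k hkn), honeU⟩ hx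
  simp only [U, Set.mem_iInter, Set.mem_ofPred_eq, mem_range] at hxU
  exact hxU j (by omega)

theorem exists_pos_choose_mul_esymmVec_eq {n k : ℕ} {x : Fin n → ℝ} (hx : x ∈ GammaPlus n k) :
    ∃ μ : Multiset ℝ, μ.card = k ∧ (∀ r ∈ μ, 0 < r) ∧
      ∀ j ≤ k, k.choose j * esymmVec n j x = n.choose j * μ.esymm j := by
  have hσ : ∀ j ≤ k, 0 < (univ.val.map x).esymm j := fun j hj => by
    simpa [esymmVec_eq_esymm] using esymmVec_pos_of_mem_gammaPlus hx hj
  have hk : k ≤ (univ.val.map x).card := by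
    simpa using le_of_esymmVec_pos (esymmVec_pos_of_mem_gammaPlus hx le_rfl)
  simpa [esymmVec_eq_esymm] using
    Multiset.exists_pos_choose_mul_esymm_eq hk (fun j hj => (hσ j hj).le) (hσ k le_rfl)

theorem sum_sq_eq_sq_sum_sub_esymmVec_two (n : ℕ) (x : Fin n → ℝ) :
    ∑ i, x i ^ 2 = (∑ i, x i) ^ 2 - 2 * esymmVec n 2 x := by
  have h := congrArg (MvPolynomial.eval x)
    (MvPolynomial.psum_eq_mul_esymm_sub_sum (Fin n) ℝ 2 two_pos)
  rw [Finset.sum_filter, Finset.Nat.sum_antidiagonal_eq_sum_range_succ_mk] at h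
  simp only [MvPolynomial.psum, map_sum, map_pow, MvPolynomial.eval_X, Nat.reduceAdd,
    Nat.cast_ofNat, MvPolynomial.esymm, Nat.succ_eq_add_one, Set.mem_Ioo, Order.lt_two_iff,
    sum_range_succ, range_one, sum_singleton, lt_self_iff_false, zero_le, and_true, ↓reduceIte,
    Order.lt_one_iff, Std.le_refl, and_self, pow_one, powersetCard_one, sum_map,
    Function.Embedding.coeFn_mk, prod_singleton, neg_mul, one_mul, Nat.add_one_sub_one, zero_add,
    Nat.not_ofNat_le_one, and_false, add_zero, sub_neg_eq_add, map_add, map_mul, map_neg, map_one,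
    MvPolynomial.eval_ofNat, map_prod] at h
  rw [h, esymmVec]
  ring

theorem abs_le_esymmVec_one {n : ℕ} {x : Fin n → ℝ} (h₁ : 0 ≤ esymmVec n 1 x)
    (h₂ : 0 ≤ esymmVec n 2 x) (i : Fin n) : |x i| ≤ esymmVec n 1 x := by
  have hsq : x i ^ 2 ≤ ∑ j, x j ^ 2 := single_le_sum (fun j _ => sq_nonneg (x j)) (mem_univ i)
  have hσ₁ : esymmVec n 1 x = ∑ j, x j := by simp [esymmVec, powersetCard_one]
  rw [sum_sq_eq_sq_sum_sub_esymmVec_two, ← hσ₁] at hsq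
  exact abs_le_of_sq_le_sq (by linarith) h₁

theorem sigmaM_of_isHermitian {n : ℕ} {A : Matrix (Fin n) (Fin n) ℝ} (hA : A.IsHermitian)
    (k : ℕ) : sigmaM n k A = esymmVec n k hA.eigenvalues :=
  dif_pos hA

theorem eigenvalue_bound_general (n k : ℕ) (hk2 : 2 ≤ k)
    (c₁ c₂ : ℝ) (hc₁ : 0 < c₁) :
    ∃ C : ℝ, ∀ (A : Matrix (Fin n) (Fin n) ℝ) (hA : A.IsHermitian),
      hA.eigenvalues ∈ GammaPlus n k →
      c₁ ≤ sigmaM n k A → sigmaM n (k - 1) A ≤ c₂ →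
      ∀ i, |hA.eigenvalues i| ≤ C := by
  refine ⟨n * ((k * c₂ / n.choose (k - 1)) ^ (k - 1) / (c₁ / n.choose k) ^ (k - 2)), ?_⟩
  intro A hA hΓ hσk hσk₁ i
  rw [sigmaM_of_isHermitian hA] at hσk hσk₁
  set x := hA.eigenvalues
  have hσ : ∀ j ≤ k, 0 < esymmVec n j x := fun j hj => esymmVec_pos_of_mem_gammaPlus hΓ hj
  have hkn : k ≤ n := le_of_esymmVec_pos (hσ k le_rfl)
  obtain ⟨μ, hcard, hμ, hrel⟩ := exists_pos_choose_mul_esymmVec_eq hΓ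
  have hchoose : ∀ j ≤ k, (0 : ℝ) < n.choose j := fun j hj => by
    exact_mod_cast Nat.choose_pos (hj.trans hkn)
  have hprod : c₁ / n.choose k ≤ μ.prod := by
    have hk := hrel k le_rfl
    rw [Nat.choose_self, Nat.cast_one, one_mul, ← hcard, μ.esymm_card, hcard] at hk
    rw [div_le_iff₀ (hchoose k le_rfl)]
    linarith
  have hE : μ.esymm (μ.card - 1) ≤ k * c₂ / n.choose (k - 1) := by
    have hk₁ := hrel (k - 1) (by omega)
    rw [Nat.choose_symm (n := k) (k := 1) (by omega), Nat.choose_one_right] at hk₁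
    rw [hcard, le_div_iff₀ (hchoose _ (by omega))]
    nlinarith
  have hsum := μ.sum_le_of_le_prod_of_esymm_le hμ (hcard ▸ hk2)
    (div_pos hc₁ (hchoose k le_rfl)) hprod hE
  rw [hcard] at hsum
  have hσ₁ : k * esymmVec n 1 x = n * μ.sum := by
    simpa [Multiset.esymm, Multiset.powersetCard_one] using hrel 1 (by omega)
  have hk : (0 : ℝ) < k := by positivity
  calc |x i| ≤ esymmVec n 1 x := abs_le_esymmVec_one (hσ 1 (by omega)).le (hσ 2 hk2).le i
    _ ≤ _ := le_of_mul_le_mul_left (by nlinarith) hk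

/-- If `A` is symmetric with eigenvalues in `Γ_k^+` (`k ≥ 2`), `σ_k(A) ≥ c₁ > 0`
and `σ_{k-1}(A) ≤ c₂`, then the eigenvalues of `A` are bounded by a constant
depending only on `c₁, c₂, n, k`. -/
theorem eigenvalue_bound (n k : ℕ) (hk2 : 2 ≤ k) (hkn : k ≤ n)
    (c₁ c₂ : ℝ) (hc₁ : 0 < c₁) :
    ∃ C : ℝ, ∀ (A : Matrix (Fin n) (Fin n) ℝ) (hA : A.IsHermitian),
      hA.eigenvalues ∈ GammaPlus n k →
      c₁ ≤ sigmaM n k A → sigmaM n (k - 1) A ≤ c₂ →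
      ∀ i, |hA.eigenvalues i| ≤ C :=
  eigenvalue_bound_general n k hk2 c₁ c₂ hc₁
end
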